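/- Let ω ∈ Σ^n with n ≥ 3m − 2 and m ≥ k, and suppose every length-m contiguous subword ω_i (i = 1,…,n−m+1) has empirical k-tuple frequency μ_i. Let μ = (1/(n−m+1)) Σ_i μ_i. Then for every φ ∈ Σ^k, |fr_ω^k(φ) − μ(φ)| ≤ (2m−2)(m−k)/(n−k+1). -/

import Mathlib

open Finset

def occCount {A : Type*} [DecidableEq A] (k : ℕ) (ω : List A) (φ : Fin k → A) : ℕ :=
  ((Finset.range (ω.length - k + 1)).filter
    (fun i => ∀ j : Fin k, ω[i + (j : ℕ)]? = some (φ j))).card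

noncomputable def freq {A : Type*} [DecidableEq A] (k : ℕ) (ω : List A) (φ : Fin k → A) : ℝ :=
  (occCount k ω φ : ℝ) / ((ω.length - k + 1 : ℕ) : ℝ)

def IsProbVec {A : Type*} [Fintype A] {k : ℕ} (η : (Fin k → A) → ℝ) : Prop :=
  (∀ φ, 0 ≤ η φ) ∧ ∑ φ : Fin k → A, η φ = 1

def ShiftInv {A : Type*} [Fintype A] (k : ℕ) (η : (Fin (k + 2) → A) → ℝ) : Prop :=
  ∀ ψ : Fin (k + 1) → A, ∑ a : A, η (Fin.cons a ψ) = ∑ a : A, η (Fin.snoc ψ a)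

def genFrom {A V : Type*} (E : V → V → A → Prop) (ω : List A) : Prop :=
  ∃ f : Fin (ω.length + 1) → V, ∀ i : Fin ω.length, E (f i.castSucc) (f i.succ) (ω.get i)

noncomputable def capacity {A : Type*} (T : Set (List A)) : ℝ :=
  Filter.atTop.limsup fun n : ℕ =>
    Real.logb 2 (Nat.card {ω : List A // ω ∈ T ∧ ω.length = n}) / n

def memGammaEps {A : Type*} [Fintype A] [DecidableEq A] {k : ℕ}
    (Γ : Set ((Fin k → A) → ℝ)) (ε : ℝ) (η : (Fin k → A) → ℝ) : Prop :=
  IsProbVec η ∧ ∃ δ, ε < δ ∧ ∀ μ : (Fin k → A) → ℝ, IsProbVec μ → μ ∉ Γ → δ ≤ ‖η - μ‖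

/-!
Let `P` be the set of positions at which `φ` occurs in `ω`; there are `K = n - k + 1` candidate
positions, and window `i` sees exactly the positions `i, …, i + m - k`. Exchanging the two sums,
`μ φ` is the mean over the shifts `j = 0, …, m - k` of `|P ∩ [j, j + R)| / R`, where
`R = n - m + 1` is the number of windows. Each interval `[j, j + R)` misses only `K - R = m - k`
of the candidate positions, so every shifted count lies between `|P| - (m - k)` and `|P|`, which
puts `μ φ` within `(m - k) / R` of `|P| / K`. Finally `n ≥ 3m - 2` gives `K ≤ (2m - 2) R`
whenever `m > k`.
-/

namespace Nat

variable (p : ℕ → Prop) [DecidablePred p]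

theorem sum_count_shift_comm (R J : ℕ) :
    ∑ i ∈ range R, count (fun j => p (i + j)) J = ∑ j ∈ range J, count (fun i => p (j + i)) R := by
  simp only [count_eq_card_filter_range, card_filter]
  rw [Finset.sum_comm]
  simp only [add_comm]

variable {p}

theorem count_shift_le_count {j R K : ℕ} (h : j + R ≤ K) :
    count (fun i => p (j + i)) R ≤ count p K :=
  calc count (fun i => p (j + i)) R ≤ count p (j + R) := by rw [count_add]; omega
    _ ≤ count p K := count_monotone p h

theorem count_le_count_shift_add {j R K : ℕ} (h : j + R ≤ K) :
    count p K ≤ count (fun i => p (j + i)) R + (K - R) := by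
  obtain ⟨c, rfl⟩ := Nat.exists_eq_add_of_le h
  rw [count_add, count_add]
  have hhead := count_le (p := p) (n := j)
  have htail := count_le (p := fun i => p (j + R + i)) (n := c)
  omega

end Nat

theorem abs_div_sub_div_le_of_mem_Icc {N K R a x : ℝ} (hN : 0 ≤ N) (hNK : N ≤ K) (hKR : K = R + a)
    (hR : 0 < R) (hx : x ∈ Set.Icc (N - a) N) : |N / K - x / R| ≤ a / R := by
  obtain ⟨hlo, hhi⟩ := hx
  have ha : 0 ≤ a := by linarith
  have hK : 0 < K := by linarith
  rw [abs_sub_le_iff, div_sub_div _ _ hK.ne' hR.ne', div_sub_div _ _ hR.ne' hK.ne',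
    div_le_div_iff₀ (by positivity) hR, div_le_div_iff₀ (by positivity) hR]
  subst hKR
  constructor <;> nlinarith [mul_le_mul_of_nonneg_left hlo hK.le, mul_le_mul_of_nonneg_left hhi hK.le,
    mul_nonneg ha hN, mul_nonneg ha (sub_nonneg.2 hNK)]

theorem Nat.abs_count_div_sub_average_count_window_le (p : ℕ → Prop) [DecidablePred p]
    {R : ℕ} (hR : 0 < R) (a : ℕ) :
    |(count p (R + a) : ℝ) / ((R + a : ℕ) : ℝ) -
        1 / (R : ℝ) * ∑ i ∈ range R, (count (fun j => p (i + j)) (a + 1) : ℝ) / ((a + 1 : ℕ) : ℝ)|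
      ≤ a / R := by
  set N := count p (R + a)
  have hJ : (0 : ℝ) < ((a + 1 : ℕ) : ℝ) := by positivity
  have hwin : ∀ j ∈ range (a + 1), (count (fun i => p (j + i)) R : ℝ) ∈ Set.Icc ((N : ℝ) - a) N := by
    intro j hj_mem
    have hj : j + R ≤ R + a := by rw [mem_range] at hj_mem; omega
    have hlo := count_le_count_shift_add (p := p) hj
    have hhi := count_shift_le_count (p := p) hj
    rw [Nat.add_sub_cancel_left] at hlo
    exact ⟨by rw [sub_le_iff_le_add]; exact_mod_cast hlo, by exact_mod_cast hhi⟩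
  have havg : 1 / (R : ℝ) * ∑ i ∈ range R, (count (fun j => p (i + j)) (a + 1) : ℝ) / ((a + 1 : ℕ) : ℝ)
      = (∑ j ∈ range (a + 1), (count (fun i => p (j + i)) R : ℝ)) / ((a + 1 : ℕ) : ℝ) / R := by
    rw [← sum_div, ← Nat.cast_sum, ← Nat.cast_sum, sum_count_shift_comm]
    ring
  rw [havg]
  refine abs_div_sub_div_le_of_mem_Icc (Nat.cast_nonneg _) (by exact_mod_cast count_le p)
    (by push_cast; ring) (by exact_mod_cast hR) ⟨?_, ?_⟩
  · rw [le_div_iff₀ hJ]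
    calc ((N : ℝ) - a) * ((a + 1 : ℕ) : ℝ) = ∑ _j ∈ range (a + 1), ((N : ℝ) - a) := by
          rw [sum_const, card_range, nsmul_eq_mul, mul_comm]
      _ ≤ _ := sum_le_sum fun j hj => (hwin j hj).1
  · rw [div_le_iff₀ hJ]
    calc _ ≤ ∑ _j ∈ range (a + 1), (N : ℝ) := sum_le_sum fun j hj => (hwin j hj).2
      _ = (N : ℝ) * ((a + 1 : ℕ) : ℝ) := by simp [mul_comm]

section Words

variable {A : Type*} [DecidableEq A] {k : ℕ}

def OccursAt (ω : List A) (φ : Fin k → A) (i : ℕ) : Prop :=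
  ∀ j : Fin k, ω[i + (j : ℕ)]? = some (φ j)

instance (ω : List A) (φ : Fin k → A) : DecidablePred (OccursAt ω φ) :=
  fun i => inferInstanceAs (Decidable (∀ j : Fin k, ω[i + (j : ℕ)]? = some (φ j)))

theorem occCount_eq_count (ω : List A) (φ : Fin k → A) :
    occCount k ω φ = Nat.count (OccursAt ω φ) (ω.length - k + 1) := by
  rw [Nat.count_eq_card_filter_range]
  rfl

theorem occCount_window {m i : ℕ} (hkm : k ≤ m) {ω : List A} (him : i + m ≤ ω.length)
    (φ : Fin k → A) :
    occCount k ((ω.drop i).take m) φ = Nat.count (fun j => OccursAt ω φ (i + j)) (m - k + 1) := by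
  have hlen : ((ω.drop i).take m).length = m := by simp; omega
  rw [occCount_eq_count, hlen, Nat.count_eq_card_filter_range, Nat.count_eq_card_filter_range]
  refine congrArg card (filter_congr fun j hj => forall_congr' fun l => ?_)
  have hjl : j + (l : ℕ) < m := by rw [mem_range] at hj; omega
  rw [List.getElem?_take_of_lt hjl, List.getElem?_drop, add_assoc]

theorem freq_window {m i : ℕ} (hkm : k ≤ m) {ω : List A} (him : i + m ≤ ω.length)
    (φ : Fin k → A) :
    freq k ((ω.drop i).take m) φ =
      (Nat.count (fun j => OccursAt ω φ (i + j)) (m - k + 1) : ℝ) / ((m - k + 1 : ℕ) : ℝ) := by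
  rw [freq, occCount_window hkm him, List.length_take, List.length_drop, min_eq_left (by omega)]

end Words

theorem cast_sub_div_le_of_three_mul_le {k m n : ℕ} (hk : 1 ≤ k) (hkm : k ≤ m) (hn : 3 * m ≤ n + 2) :
    ((m - k : ℕ) : ℝ) / ((n - m + 1 : ℕ) : ℝ) ≤
      (2 * (m : ℝ) - 2) * ((m : ℝ) - (k : ℝ)) / ((n : ℝ) - (k : ℝ) + 1) := by
  rcases hkm.eq_or_lt with rfl | hlt
  · simp
  have hmn : m ≤ n := by omega
  have hm : (2 : ℝ) ≤ m := by exact_mod_cast (show 2 ≤ m by omega)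
  have hn' : 3 * (m : ℝ) ≤ n + 2 := by exact_mod_cast hn
  have hkm' : (k : ℝ) + 1 ≤ m := by exact_mod_cast hlt
  have hk' : (1 : ℝ) ≤ k := by exact_mod_cast hk
  push_cast [Nat.cast_sub hlt.le, Nat.cast_sub hmn]
  rw [div_le_div_iff₀ (by linarith) (by linarith)]
  nlinarith [mul_nonneg (sub_nonneg.2 hkm') (sub_nonneg.2 hm)]

theorem stmt7_general {A : Type*} [DecidableEq A] (k m : ℕ)
    (hk : 1 ≤ k) (hkm : k ≤ m)
    (ω : List A) (hn : 3 * m ≤ ω.length + 2)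
    (μ : (Fin k → A) → ℝ)
    (hμ : ∀ φ, μ φ = (1 / ((ω.length - m + 1 : ℕ) : ℝ)) *
      ∑ i ∈ Finset.range (ω.length - m + 1), freq k ((ω.drop i).take m) φ)
    (φ : Fin k → A) :
    |freq k ω φ - μ φ| ≤
      (2 * (m : ℝ) - 2) * ((m : ℝ) - (k : ℝ)) / ((ω.length : ℝ) - (k : ℝ) + 1) := by
  have hmn : m ≤ ω.length := by omega
  have hwin : ∀ i ∈ range (ω.length - m + 1), freq k ((ω.drop i).take m) φ =
      (Nat.count (fun j => OccursAt ω φ (i + j)) (m - k + 1) : ℝ) / ((m - k + 1 : ℕ) : ℝ) :=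
    fun i hi => freq_window hkm (by rw [mem_range] at hi; omega) φ
  have hsplit : ω.length - k + 1 = (ω.length - m + 1) + (m - k) := by omega
  have key := Nat.abs_count_div_sub_average_count_window_le (OccursAt ω φ)
    (by omega : 0 < ω.length - m + 1) (m - k)
  rw [← hsplit, sum_congr rfl fun i hi => (hwin i hi).symm, ← hμ,
    ← occCount_eq_count] at key
  calc |freq k ω φ - μ φ| ≤ ((m - k : ℕ) : ℝ) / ((ω.length - m + 1 : ℕ) : ℝ) := key
    _ ≤ _ := cast_sub_div_le_of_three_mul_le hk hkm hn

theorem stmt7 {A : Type*} [Fintype A] [DecidableEq A] (k m : ℕ)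
    (hk : 1 ≤ k) (hkm : k ≤ m)
    (ω : List A) (hn : 3 * m ≤ ω.length + 2)
    (μ : (Fin k → A) → ℝ)
    (hμ : ∀ φ, μ φ = (1 / ((ω.length - m + 1 : ℕ) : ℝ)) *
      ∑ i ∈ Finset.range (ω.length - m + 1), freq k ((ω.drop i).take m) φ)
    (φ : Fin k → A) :
    |freq k ω φ - μ φ| ≤
      (2 * (m : ℝ) - 2) * ((m : ℝ) - (k : ℝ)) / ((ω.length : ℝ) - (k : ℝ) + 1) :=
  stmt7_general k m hk hkm ω hn μ hμ φ
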